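/- Let V be a finite set of N nodes partitioned into two sensitive groups S₀ and S₁ of sizes N₀ ≥ 1 and N₁ ≥ 1, with features X : V → ℝ^d and the fairness-aware message passing F⁽⁰⁾ = X, F⁽¹⁾, F⁽²⁾. Suppose g : ℝ² → ℝ² is the softmax map and L > 0 satisfies 2·|g(x)₁ − g(y)₁| ≤ L·‖x − y‖ for all x, y ∈ ℝ². For any matrix W ∈ ℝ^{d×2}, define Δ_DP = |(1/N₀)·Σ_{i∈S₀} g(Wᵀ F⁽²⁾_i)₁ − (1/N₁)·Σ_{j∈S₁} g(Wᵀ F⁽²⁾_j)₁| and Δ_DP^Rep = ‖(1/N₀)·Σ_{i∈S₀} F⁽²⁾_i − (1/N₁)·Σ_{j∈S₁} F⁽²⁾_j‖. Then Δ_DP ≤ (L/2)·‖W‖_op·(Δ_DP^Rep + C₁·‖Δ‖), where C₁ = (2 + 4/N₀ + 4/N₁)² + 6 + 8/N₀ + 8/N₁ and Δ ∈ ℝ^d is the componentwise maximal deviation of X from its overall mean, Δ_m = max_{i∈V} |(1/N)·Σ_{j∈V} X_{j,m} − X_{i,m}|. -/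

import Mathlib

open Matrix Finset

/-- RBF kernel `k(x,y) = exp(-α‖x-y‖²)`. -/
noncomputable def ker {d : ℕ} (α : ℝ) (x y : EuclideanSpace ℝ (Fin d)) : ℝ :=
  Real.exp (-α * ‖x - y‖ ^ 2)

/-- The sensitive group `S_b`, where group membership is given by `grp`
(`false` encodes `S₀` and `true` encodes `S₁`). -/
def sgrp {V : Type*} [Fintype V] (grp : V → Bool) (b : Bool) : Finset V :=
  Finset.univ.filter (fun i => grp i = b)

/-- Fairness-aware message passing: `F 0 = X`, and each layer `k ≥ 1` updates node `i`
(lying in group `grp i`, with opposite group `!grp i`) by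
`F⁽ᵏ⁾_i = X_i + (1/|N(i)|)·Σ_{u∈N(i)} F⁽ᵏ⁻¹⁾_u
       − (1/N_t²)·Σ_{u∈S_t} k(F⁽ᵏ⁻¹⁾_u,F⁽ᵏ⁻¹⁾_i)·F⁽ᵏ⁻¹⁾_u
       + (1/(N₀N₁))·Σ_{u∈S_{1−t}} k(F⁽ᵏ⁻¹⁾_u,F⁽ᵏ⁻¹⁾_i)·F⁽ᵏ⁻¹⁾_u
       + ((1/N_t²)·Σ_{u∈S_t} k(...) − (1/(N₀N₁))·Σ_{u∈S_{1−t}} k(...))·F⁽ᵏ⁻¹⁾_i`. -/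
def FairMP {V : Type*} [Fintype V] {d : ℕ} (α : ℝ) (grp : V → Bool)
    (Nb : V → Finset V) (X : V → EuclideanSpace ℝ (Fin d))
    (F : ℕ → V → EuclideanSpace ℝ (Fin d)) : Prop :=
  F 0 = X ∧
  ∀ k : ℕ, 1 ≤ k → ∀ i : V,
    F k i = X i + (((Nb i).card : ℝ)⁻¹) • ∑ u ∈ Nb i, F (k-1) u
      - (1 / ((sgrp grp (grp i)).card : ℝ) ^ 2) •
          ∑ u ∈ sgrp grp (grp i), ker α (F (k-1) u) (F (k-1) i) • F (k-1) u
      + (1 / (((sgrp grp false).card : ℝ) * ((sgrp grp true).card : ℝ))) •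
          ∑ u ∈ sgrp grp (!grp i), ker α (F (k-1) u) (F (k-1) i) • F (k-1) u
      + ((1 / ((sgrp grp (grp i)).card : ℝ) ^ 2) *
            ∑ u ∈ sgrp grp (grp i), ker α (F (k-1) u) (F (k-1) i)
         - (1 / (((sgrp grp false).card : ℝ) * ((sgrp grp true).card : ℝ))) *
            ∑ u ∈ sgrp grp (!grp i), ker α (F (k-1) u) (F (k-1) i)) • F (k-1) i

/-- Componentwise maximal deviation of the rows of `F` from the overall mean row:
`(dev F)_m = max_{i∈V} |F_{i,m} − (1/N)·Σ_{j∈V} F_{j,m}|`. -/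
noncomputable def dev {V : Type*} [Fintype V] {d : ℕ}
    (F : V → EuclideanSpace ℝ (Fin d)) : EuclideanSpace ℝ (Fin d) :=
  WithLp.toLp 2 fun m => ⨆ i : V, |F i m - (1 / (Fintype.card V : ℝ)) * ∑ j : V, F j m|

/-- The softmax map `g : ℝ² → ℝ²`, `g(x)_j = exp(x_j)/(exp(x₀) + exp(x₁))`. -/
noncomputable def softmax (x : EuclideanSpace ℝ (Fin 2)) : EuclideanSpace ℝ (Fin 2) :=
  WithLp.toLp 2 fun j => Real.exp (x j) / (Real.exp (x 0) + Real.exp (x 1))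

/-- `A` acting on a Euclidean vector `v`, i.e. the matrix-vector product `A v`. -/
noncomputable def mulVecE {m n : ℕ} (A : Matrix (Fin m) (Fin n) ℝ)
    (v : EuclideanSpace ℝ (Fin n)) : EuclideanSpace ℝ (Fin m) :=
  WithLp.toLp 2 fun i => ∑ j, A i j * v j

/-- The operator norm of `W ∈ ℝ^{d×2}`, viewed (via `v ↦ Wᵀ v`) as a linear map
`ℝ^d → ℝ²` between Euclidean spaces. -/
noncomputable def opNorm {d : ℕ} (W : Matrix (Fin d) (Fin 2) ℝ) : ℝ :=
  ‖LinearMap.toContinuousLinearMap (Matrix.toEuclideanLin Wᵀ)‖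

/-! Each fair layer adds to `X_i` a neighbourhood average of the previous layer and a kernel
correction `Σ_u w_u (F_i - F_u)` of total weight at most `N_t / N_t² + N_{1-t} / (N₀N₁) = 2/N_t`
(as `0 ≤ k ≤ 1`). So if the previous layer lies in a ball of radius `r`, the new layer minus `X`
lies in a ball of radius `r + 4r/N_t`. Starting from `‖X_i - X̄‖ ≤ ‖Δ‖`, two layers put any two
nodes of opposite groups within `((2 + 4/N₀ + 4/N₁)² + 2)·‖Δ‖` of each other; the Lipschitz bound
for `g ∘ Wᵀ` turns this into a bound on every pairwise difference of outputs, hence on the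
difference of the group averages. The remaining terms of the stated bound are nonnegative. -/

lemma ker_nonneg {d : ℕ} (α : ℝ) (x y : EuclideanSpace ℝ (Fin d)) : 0 ≤ ker α x y :=
  (Real.exp_pos _).le

lemma ker_le_one {d : ℕ} {α : ℝ} (hα : 0 ≤ α) (x y : EuclideanSpace ℝ (Fin d)) :
    ker α x y ≤ 1 :=
  Real.exp_le_one_iff.2 (by nlinarith [sq_nonneg ‖x - y‖])

section Averages

variable {ι E : Type*} [SeminormedAddCommGroup E] [NormedSpace ℝ E]

lemma norm_inv_card_smul_sum_sub_le {s : Finset ι} (hs : s.Nonempty) {f : ι → E} {c : E}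
    {r : ℝ} (h : ∀ u ∈ s, ‖f u - c‖ ≤ r) : ‖(#s : ℝ)⁻¹ • ∑ u ∈ s, f u - c‖ ≤ r := by
  have hcard : (0 : ℝ) < #s := by exact_mod_cast hs.card_pos
  have hsub : (#s : ℝ)⁻¹ • ∑ u ∈ s, f u - c = (#s : ℝ)⁻¹ • ∑ u ∈ s, (f u - c) := by
    rw [sum_sub_distrib, smul_sub, sum_const, ← Nat.cast_smul_eq_nsmul ℝ, smul_smul,
      inv_mul_cancel₀ hcard.ne', one_smul]
  calc ‖(#s : ℝ)⁻¹ • ∑ u ∈ s, f u - c‖ ≤ (#s : ℝ)⁻¹ * ∑ _u ∈ s, r := by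
        rw [hsub, norm_smul, Real.norm_of_nonneg (by positivity)]
        gcongr
        exact norm_sum_le_of_le s h
    _ = r := by rw [sum_const, nsmul_eq_mul, inv_mul_cancel_left₀ hcard.ne']

lemma norm_sum_smul_le_of_abs_le {s : Finset ι} {a : ι → ℝ} {f : ι → E} {w R : ℝ}
    (ha : ∀ u ∈ s, |a u| ≤ w) (hf : ∀ u ∈ s, ‖f u‖ ≤ R) :
    ‖∑ u ∈ s, a u • f u‖ ≤ #s * w * R := by
  calc ‖∑ u ∈ s, a u • f u‖ ≤ ∑ _u ∈ s, w * R := by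
        refine norm_sum_le_of_le s fun u hu => ?_
        rw [norm_smul, Real.norm_eq_abs]
        exact mul_le_mul (ha u hu) (hf u hu) (norm_nonneg _) ((abs_nonneg _).trans (ha u hu))
    _ = #s * w * R := by rw [sum_const, nsmul_eq_mul, mul_assoc]

lemma abs_inv_card_mul_sum_sub_le {s t : Finset ι} (hs : s.Nonempty) (ht : t.Nonempty)
    {f : ι → ℝ} {B : ℝ} (h : ∀ i ∈ s, ∀ j ∈ t, |f i - f j| ≤ B) :
    |1 / (#s : ℝ) * ∑ i ∈ s, f i - 1 / (#t : ℝ) * ∑ j ∈ t, f j| ≤ B := by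
  simp only [one_div, ← smul_eq_mul, ← Real.norm_eq_abs] at h ⊢
  refine norm_inv_card_smul_sum_sub_le hs fun i hi => ?_
  rw [norm_sub_rev]
  exact norm_inv_card_smul_sum_sub_le ht fun j hj => by rw [norm_sub_rev]; exact h i hi j hj

end Averages

lemma EuclideanSpace.norm_le_norm_of_abs_le {d : ℕ} {v w : EuclideanSpace ℝ (Fin d)}
    (h : ∀ m, |v m| ≤ w m) : ‖v‖ ≤ ‖w‖ := by
  rw [EuclideanSpace.norm_eq, EuclideanSpace.norm_eq]
  gcongr with m
  exact (h m).trans (le_abs_self _)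

lemma norm_sub_mean_le_norm_dev {V : Type*} [Fintype V] {d : ℕ}
    (X : V → EuclideanSpace ℝ (Fin d)) (i : V) :
    ‖X i - (1 / (Fintype.card V : ℝ)) • ∑ j, X j‖ ≤ ‖dev X‖ := by
  refine EuclideanSpace.norm_le_norm_of_abs_le fun m => ?_
  have hm : (X i - (1 / (Fintype.card V : ℝ)) • ∑ j, X j) m
      = X i m - (1 / (Fintype.card V : ℝ)) * ∑ j, X j m := by
    simp [WithLp.ofLp_sum, Finset.sum_apply]
  rw [hm]
  exact le_ciSup (f := fun i => |X i m - (1 / (Fintype.card V : ℝ)) * ∑ j, X j m|)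
    (Set.finite_range _).bddAbove i

lemma mulVecE_eq_toEuclideanLin {m n : ℕ} (A : Matrix (Fin m) (Fin n) ℝ)
    (v : EuclideanSpace ℝ (Fin n)) :
    mulVecE A v = LinearMap.toContinuousLinearMap (Matrix.toEuclideanLin A) v := by
  ext j
  simp [mulVecE, Matrix.mulVec, dotProduct]

lemma norm_mulVecE_transpose_sub_le {d : ℕ} (W : Matrix (Fin d) (Fin 2) ℝ)
    (v w : EuclideanSpace ℝ (Fin d)) :
    ‖mulVecE Wᵀ v - mulVecE Wᵀ w‖ ≤ opNorm W * ‖v - w‖ := by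
  rw [mulVecE_eq_toEuclideanLin, mulVecE_eq_toEuclideanLin, ← map_sub]
  exact ContinuousLinearMap.le_opNorm _ _

lemma opNorm_nonneg {d : ℕ} (W : Matrix (Fin d) (Fin 2) ℝ) : 0 ≤ opNorm W :=
  norm_nonneg _

section FairLayer

variable {V : Type*} [Fintype V] {d : ℕ} {α : ℝ} {grp : V → Bool} {Nb : V → Finset V}

noncomputable def fairUpdate (α : ℝ) (grp : V → Bool) (Nb : V → Finset V)
    (X G : V → EuclideanSpace ℝ (Fin d)) (i : V) : EuclideanSpace ℝ (Fin d) :=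
  X i + (((Nb i).card : ℝ)⁻¹) • ∑ u ∈ Nb i, G u
    - (1 / ((sgrp grp (grp i)).card : ℝ) ^ 2) •
        ∑ u ∈ sgrp grp (grp i), ker α (G u) (G i) • G u
    + (1 / (((sgrp grp false).card : ℝ) * ((sgrp grp true).card : ℝ))) •
        ∑ u ∈ sgrp grp (!grp i), ker α (G u) (G i) • G u
    + ((1 / ((sgrp grp (grp i)).card : ℝ) ^ 2) *
          ∑ u ∈ sgrp grp (grp i), ker α (G u) (G i)
       - (1 / (((sgrp grp false).card : ℝ) * ((sgrp grp true).card : ℝ))) *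
          ∑ u ∈ sgrp grp (!grp i), ker α (G u) (G i)) • G i

lemma FairMP.apply_eq_fairUpdate {X : V → EuclideanSpace ℝ (Fin d)}
    {F : ℕ → V → EuclideanSpace ℝ (Fin d)} (hF : FairMP α grp Nb X F) {k : ℕ} (hk : 1 ≤ k)
    (i : V) : F k i = fairUpdate α grp Nb X (F (k - 1)) i :=
  hF.2 k hk i

lemma card_sgrp_false_mul_card_sgrp_true (grp : V → Bool) (b : Bool) :
    ((#(sgrp grp false) : ℝ) * #(sgrp grp true)) = #(sgrp grp b) * #(sgrp grp !b) := by
  cases b <;> simp [mul_comm]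

lemma inv_card_sgrp_le (grp : V → Bool) (b : Bool) :
    (#(sgrp grp b) : ℝ)⁻¹ ≤ (#(sgrp grp false) : ℝ)⁻¹ + (#(sgrp grp true) : ℝ)⁻¹ := by
  cases b <;> simp

lemma norm_fairUpdate_sub_le (hα : 0 ≤ α) (hS : ∀ b, (sgrp grp b).Nonempty)
    (hNb : ∀ i, (Nb i).Nonempty) (X : V → EuclideanSpace ℝ (Fin d))
    {G : V → EuclideanSpace ℝ (Fin d)} {c : EuclideanSpace ℝ (Fin d)} {r : ℝ}
    (hG : ∀ u, ‖G u - c‖ ≤ r) (i : V) :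
    ‖fairUpdate α grp Nb X G i - X i - c‖ ≤ r + 4 * r / #(sgrp grp (grp i)) := by
  set s := sgrp grp (grp i)
  set s' := sgrp grp (!grp i)
  have hn : (0 : ℝ) < #s := by exact_mod_cast (hS _).card_pos
  have hn' : (0 : ℝ) < #s' := by exact_mod_cast (hS _).card_pos
  set k : V → ℝ := fun u => ker α (G u) (G i)
  have hdecomp : fairUpdate α grp Nb X G i - X i - c
      = ((#(Nb i) : ℝ)⁻¹ • ∑ u ∈ Nb i, G u - c)
        + (∑ u ∈ s, (1 / (#s : ℝ) ^ 2 * k u) • (G i - G u)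
          - ∑ u ∈ s', (1 / ((#s : ℝ) * #s') * k u) • (G i - G u)) := by
    rw [fairUpdate, card_sgrp_false_mul_card_sgrp_true grp (grp i)]
    simp only [smul_sub, sub_smul, sum_sub_distrib, smul_sum, smul_smul, mul_sum, sum_smul]
    abel
  have hdiff : ∀ u, ‖G i - G u‖ ≤ 2 * r := fun u => by
    linarith [norm_sub_le_norm_sub_add_norm_sub (G i) c (G u), hG i, norm_sub_rev c (G u) ▸ hG u]
  have hweight : ∀ p, 0 ≤ p → ∀ u, |p * k u| ≤ p := fun p hp u => by
    rw [abs_of_nonneg (mul_nonneg hp (ker_nonneg _ _ _))]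
    exact mul_le_of_le_one_right hp (ker_le_one hα _ _)
  have hsame := norm_sum_smul_le_of_abs_le (s := s)
    (fun u _ => hweight (1 / (#s : ℝ) ^ 2) (by positivity) u) fun u _ => hdiff u
  have hother := norm_sum_smul_le_of_abs_le (s := s')
    (fun u _ => hweight (1 / ((#s : ℝ) * #s')) (by positivity) u) fun u _ => hdiff u
  calc ‖fairUpdate α grp Nb X G i - X i - c‖
      ≤ r + (#s * (1 / (#s : ℝ) ^ 2) * (2 * r) + #s' * (1 / ((#s : ℝ) * #s')) * (2 * r)) := by
        rw [hdecomp]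
        refine (norm_add_le _ _).trans (add_le_add ?_ ((norm_sub_le _ _).trans ?_))
        · exact norm_inv_card_smul_sum_sub_le (hNb i) fun u _ => hG u
        · exact add_le_add hsame hother
    _ = r + 4 * r / #s := by field_simp; ring

lemma FairMP.norm_layer_two_sub_le {X : V → EuclideanSpace ℝ (Fin d)}
    {F : ℕ → V → EuclideanSpace ℝ (Fin d)} (hF : FairMP α grp Nb X F) (hα : 0 ≤ α)
    (hS : ∀ b, (sgrp grp b).Nonempty) (hNb : ∀ i, (Nb i).Nonempty) {i j : V}
    (hi : grp i = false) (hj : grp j = true) :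
    ‖F 2 i - F 2 j‖
      ≤ ((2 + 4 / (#(sgrp grp false) : ℝ) + 4 / (#(sgrp grp true) : ℝ)) ^ 2 + 2) * ‖dev X‖ := by
  set D := ‖dev X‖
  set xbar := (1 / (Fintype.card V : ℝ)) • ∑ j, X j
  set a := 2 + 4 / (#(sgrp grp false) : ℝ) + 4 / (#(sgrp grp true) : ℝ) with ha
  have hX : ∀ u, ‖X u - xbar‖ ≤ D := norm_sub_mean_le_norm_dev X
  have hlayer1 : ∀ u, ‖F 1 u - (xbar + xbar)‖ ≤ a * D := fun u => by
    have h := norm_fairUpdate_sub_le hα hS hNb X (G := F 0) (by rwa [hF.1]) u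
    rw [← hF.apply_eq_fairUpdate le_rfl] at h
    have hcard : 4 * D / #(sgrp grp (grp u)) ≤ (a - 2) * D := calc
      _ = 4 * (#(sgrp grp (grp u)) : ℝ)⁻¹ * D := by ring
      _ ≤ 4 * ((#(sgrp grp false) : ℝ)⁻¹ + (#(sgrp grp true) : ℝ)⁻¹) * D := by
        gcongr
        exact inv_card_sgrp_le grp _
      _ = (a - 2) * D := by rw [ha]; ring
    calc ‖F 1 u - (xbar + xbar)‖ ≤ ‖F 1 u - X u - xbar‖ + ‖X u - xbar‖ := by
          rw [show F 1 u - (xbar + xbar) = (F 1 u - X u - xbar) + (X u - xbar) by abel]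
          exact norm_add_le _ _
      _ ≤ a * D := by linarith [hX u]
  have hlayer2 :
      ∀ u, ‖F 2 u - X u - (xbar + xbar)‖ ≤ a * D + 4 * (a * D) / #(sgrp grp (grp u)) :=
    fun u => hF.apply_eq_fairUpdate (k := 2) one_le_two u ▸
      norm_fairUpdate_sub_le hα hS hNb X hlayer1 u
  calc ‖F 2 i - F 2 j‖
      ≤ ‖F 2 i - X i - (xbar + xbar)‖ + ‖F 2 j - X j - (xbar + xbar)‖
        + (‖X i - xbar‖ + ‖X j - xbar‖) := by
        rw [show F 2 i - F 2 j = (F 2 i - X i - (xbar + xbar)) - (F 2 j - X j - (xbar + xbar))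
          + ((X i - xbar) - (X j - xbar)) by abel]
        exact (norm_add_le _ _).trans (add_le_add (norm_sub_le _ _) (norm_sub_le _ _))
    _ ≤ (a * D + 4 * (a * D) / #(sgrp grp false)) + (a * D + 4 * (a * D) / #(sgrp grp true))
        + (D + D) := by
        gcongr
        · exact hi ▸ hlayer2 i
        · exact hj ▸ hlayer2 j
        · exact hX i
        · exact hX j
    _ = (a ^ 2 + 2) * D := by rw [ha]; ring

end FairLayer

/-- Theorem 4.1 (`K = 2`): `Δ_DP ≤ (L/2)·‖W‖_op·(Δ_DP^Rep(F⁽²⁾) + C₁·‖Δ‖)` with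
`C₁ = (2 + 4/N₀ + 4/N₁)² + 6 + 8/N₀ + 8/N₁`, where `g` is the softmax map and `L > 0`
satisfies `2·|g(x)₁ − g(y)₁| ≤ L·‖x − y‖` for all `x, y ∈ ℝ²`. -/
theorem stmt0 {V : Type*} [Fintype V] {d : ℕ} {α : ℝ} (hα : 0 < α)
    (grp : V → Bool) (N₀ N₁ : ℕ)
    (hcard0 : (sgrp grp false).card = N₀) (hcard1 : (sgrp grp true).card = N₁)
    (hN₀ : 1 ≤ N₀) (hN₁ : 1 ≤ N₁)
    (Nb : V → Finset V) (hNb : ∀ i, (Nb i).Nonempty)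
    (X : V → EuclideanSpace ℝ (Fin d)) (F : ℕ → V → EuclideanSpace ℝ (Fin d))
    (hF : FairMP α grp Nb X F)
    (L : ℝ) (hL : 0 < L)
    (hLip : ∀ x y : EuclideanSpace ℝ (Fin 2),
      2 * |softmax x 1 - softmax y 1| ≤ L * ‖x - y‖)
    (W : Matrix (Fin d) (Fin 2) ℝ) :
    |(1 / (N₀ : ℝ)) * ∑ i ∈ sgrp grp false, softmax (mulVecE Wᵀ (F 2 i)) 1
        - (1 / (N₁ : ℝ)) * ∑ j ∈ sgrp grp true, softmax (mulVecE Wᵀ (F 2 j)) 1| ≤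
      L / 2 * opNorm W *
        (‖(1 / (N₀ : ℝ)) • ∑ i ∈ sgrp grp false, F 2 i
            - (1 / (N₁ : ℝ)) • ∑ j ∈ sgrp grp true, F 2 j‖
          + ((2 + 4 / (N₀ : ℝ) + 4 / (N₁ : ℝ)) ^ 2 + 6 + 8 / (N₀ : ℝ) + 8 / (N₁ : ℝ))
              * ‖dev X‖) := by
  subst hcard0 hcard1
  have hS : ∀ b, (sgrp grp b).Nonempty := fun b => by
    cases b
    exacts [card_pos.1 hN₀, card_pos.1 hN₁]
  set B := ((2 + 4 / (#(sgrp grp false) : ℝ) + 4 / (#(sgrp grp true) : ℝ)) ^ 2 + 2) * ‖dev X‖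
  have hW := opNorm_nonneg W
  have hpair : ∀ i ∈ sgrp grp false, ∀ j ∈ sgrp grp true,
      |softmax (mulVecE Wᵀ (F 2 i)) 1 - softmax (mulVecE Wᵀ (F 2 j)) 1| ≤ L / 2 * opNorm W * B :=
    fun i hi j hj => calc
      _ ≤ L / 2 * ‖mulVecE Wᵀ (F 2 i) - mulVecE Wᵀ (F 2 j)‖ := by
        linarith [hLip (mulVecE Wᵀ (F 2 i)) (mulVecE Wᵀ (F 2 j))]
      _ ≤ L / 2 * (opNorm W * ‖F 2 i - F 2 j‖) := by
        gcongr
        exact norm_mulVecE_transpose_sub_le W _ _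
      _ ≤ L / 2 * (opNorm W * B) := by
        gcongr
        exact hF.norm_layer_two_sub_le hα.le hS hNb (mem_filter.1 hi).2 (mem_filter.1 hj).2
      _ = L / 2 * opNorm W * B := by ring
  refine (abs_inv_card_mul_sum_sub_le (hS false) (hS true) hpair).trans ?_
  gcongr
  have hC : (0 : ℝ) ≤ (4 + 8 / #(sgrp grp false) + 8 / #(sgrp grp true)) * ‖dev X‖ := by positivity
  linarith [norm_nonneg ((1 / (#(sgrp grp false) : ℝ)) • ∑ i ∈ sgrp grp false, F 2 i
    - (1 / (#(sgrp grp true) : ℝ)) • ∑ j ∈ sgrp grp true, F 2 j)]
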